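/- The composition-lift conjecture is false, witnessed by G_φ and G_ψ: both graphs are path-complete on Σ = {1, 2}, strongly connected, and minimally path-complete (removing any single edge destroys path-completeness), and (ii) holds: for every n ≥ 1, every pair of invertible matrices A₁, A₂ ∈ GL(n, ℝ), and every template V (a family of subsets V_m ⊆ C⁰(ℝ^m; ℝ)) closed under forward composition with invertible linear maps (V ∈ V_m and A ∈ GL(m, ℝ) imply V ∘ A ∈ V_m), if there exist V_a, V_b, V_c ∈ V_n ∩ Lyap₀(ℝⁿ) admissible for G_φ and the maps x ↦ A_i x with γ = 1, then there exist V_{a'}, V_{b'} ∈ V_n ∩ Lyap₀(ℝⁿ) admissible for G_ψ and the same maps with γ = 1; yet (i) fails: the forward composition lift G_φ^∘ does not simulate G_ψ. -/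

import Mathlib

open Filter

/-- A labeled digraph on node type `S` with alphabet `A`, given by its edge set,
is path-complete if every nonempty word is the label sequence of some path. -/
def PathComplete {S A : Type*} (E : Set (S × S × A)) : Prop :=
  ∀ w : List A, w ≠ [] → ∃ s : Fin (w.length + 1) → S,
    ∀ j : Fin w.length, (s j.castSucc, s j.succ, w.get j) ∈ E

/-- `G₁` (edge set `E₁`) simulates `G₂` (edge set `E₂`). -/
def Simulates {S₁ S₂ A : Type*} (E₁ : Set (S₁ × S₁ × A)) (E₂ : Set (S₂ × S₂ × A)) : Prop :=
  ∃ R : S₂ → S₁, ∀ a b i, (a, b, i) ∈ E₂ → (R a, R b, i) ∈ E₁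

/-- Simulation where the simulating graph has node set `V₁` inside ambient type `N₁`. -/
def SimulatesOn {N₁ N₂ A : Type*} (V₁ : Set N₁) (E₁ : Set (N₁ × N₁ × A))
    (E₂ : Set (N₂ × N₂ × A)) : Prop :=
  ∃ R : N₂ → N₁, (∀ s, R s ∈ V₁) ∧ ∀ a b i, (a, b, i) ∈ E₂ → (R a, R b, i) ∈ E₁

/-- Class K∞ function. -/
def IsKInfty (α : ℝ → ℝ) : Prop :=
  Continuous α ∧ StrictMono α ∧ α 0 = 0 ∧ Tendsto α atTop atTop

/-- Membership in `Lyap₀(ℝⁿ)`. -/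
def IsLyap {n : ℕ} (V : EuclideanSpace ℝ (Fin n) → ℝ) : Prop :=
  Continuous V ∧ V 0 = 0 ∧ (∀ x, x ≠ 0 → 0 < V x) ∧
  ∃ α₁ α₂ : ℝ → ℝ, IsKInfty α₁ ∧ IsKInfty α₂ ∧ ∀ x, α₁ ‖x‖ ≤ V x ∧ V x ≤ α₂ ‖x‖

/-- `(V_s)_{s}` together with `γ` is admissible for the graph with edge set `E`
and the switched maps `f`. -/
def Admissible {S A : Type*} {n : ℕ} (E : Set (S × S × A))
    (f : A → EuclideanSpace ℝ (Fin n) → EuclideanSpace ℝ (Fin n))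
    (V : S → EuclideanSpace ℝ (Fin n) → ℝ) (γ : ℝ) : Prop :=
  ∀ a b i, (a, b, i) ∈ E → ∀ x, V a x ≥ γ * V b (f i x)

/-- Edge set of the `T`-sum lift: nodes are multisets of size `T`. -/
def sumLiftEdgesT {S A : Type*} (E : Set (S × S × A)) (T : ℕ) :
    Set (Multiset S × Multiset S × A) :=
  { e | ∃ L : List (S × S), L.length = T ∧ (∀ p ∈ L, (p.1, p.2, e.2.2) ∈ E) ∧
      e.1 = ↑(L.map Prod.fst) ∧ e.2.1 = ↑(L.map Prod.snd) }

/-- Edge set of the sum lift `G^⊕` (union over all `T ≥ 1`). -/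
def sumLiftEdges {S A : Type*} (E : Set (S × S × A)) : Set (Multiset S × Multiset S × A) :=
  ⋃ T ∈ Set.Ici 1, sumLiftEdgesT E T

/-- Edge set of the `T`-forward composition lift `G^{∘T}`; a word `(j₁, …, j_T)` is
encoded as the list `[j₁, …, j_T]`.  For `T = 0` this is `G` itself (with empty words). -/
def fwdLiftEdges {S A : Type*} (E : Set (S × S × A)) :
    ℕ → Set ((S × List A) × (S × List A) × A)
  | 0 => { e | ∃ (a b : S) (i : A), (a, b, i) ∈ E ∧ e = ((a, []), (b, []), i) }
  | T + 1 => { e | ∃ (a b : S) (i : A) (l : List A) (jT : A), (a, b, i) ∈ E ∧ l.length = T ∧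
      e = ((a, l ++ [jT]), (b, i :: l), jT) }

/-- Edge set of the `T`-backward composition lift `G^{∘-T}`. -/
def bwdLiftEdges {S A : Type*} (E : Set (S × S × A)) :
    ℕ → Set ((S × List A) × (S × List A) × A)
  | 0 => { e | ∃ (a b : S) (i : A), (a, b, i) ∈ E ∧ e = ((a, []), (b, []), i) }
  | T + 1 => { e | ∃ (a b : S) (i : A) (l : List A) (jT : A), (a, b, i) ∈ E ∧ l.length = T ∧
      e = ((a, i :: l), (b, l ++ [jT]), jT) }

/-- The underlying undirected graph on node set `V` with labeled edge set `E` is connected. -/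
def ConnectedOn {N A : Type*} (V : Set N) (E : Set (N × N × A)) : Prop :=
  ∀ x ∈ V, ∀ y ∈ V,
    Relation.ReflTransGen (fun u v => ∃ i, (u, v, i) ∈ E ∨ (v, u, i) ∈ E) x y

/-- Transpose of a labeled digraph (reverse all edges). -/
def transposeEdges {S A : Type*} (E : Set (S × S × A)) : Set (S × S × A) :=
  { e | (e.2.1, e.1, e.2.2) ∈ E }

/-- Strong connectedness of a labeled digraph. -/
def StronglyConnectedEdges {S A : Type*} (E : Set (S × S × A)) : Prop :=
  ∀ x y : S, Relation.ReflTransGen (fun u v => ∃ i, (u, v, i) ∈ E) x y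

/-- Graph `G_φ`: nodes `a = 0`, `b = 1`, `c = 2`; labels `1 = 0`, `2 = 1`. -/
def GphiEdges : Set (Fin 3 × Fin 3 × Fin 2) :=
  {(0, 0, 0), (0, 1, 0), (1, 0, 1), (0, 2, 1), (2, 0, 1)}

/-- Graph `G_ψ`: nodes `a' = 0`, `b' = 1`; labels `1 = 0`, `2 = 1`. -/
def GpsiEdges : Set (Fin 2 × Fin 2 × Fin 2) :=
  {(0, 0, 0), (0, 1, 0), (0, 1, 1), (1, 0, 1)}

/-!
Both graphs are path-complete because a path can be read off the word itself: the node at a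
position is determined by the parity of the run of letters `2` starting there (and, in `G_φ`,
by whether the previous letter was `1`).  For part (ii), `V_{a'} := V_a` and
`V_{b'} := V_a ∘ A₂` are admissible for `G_ψ`, since the two-step paths `a →¹ b →² a` and
`a →² c →² a` of `G_φ` give `V_a ≥ V_a ∘ A₂ ∘ A₁` and `V_a ≥ V_a ∘ A₂ ∘ A₂`.  Part (i) fails:
in `G_φ^{∘T}` with `T ≥ 1` every edge leaving a node carries the last letter of that node's word,
so the image of `a'`, which has out-edges labelled `1` and `2`, lies in `G_φ^{∘0} = G_φ` together
with all its successors; but `G_φ` does not simulate `G_ψ`.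
-/

section LabeledDigraph

variable {S A : Type*} {E : Set (S × S × A)}

theorem pathComplete_of_forall_split (node : List A → List A → S)
    (h : ∀ u i v, (node u (i :: v), node (u ++ [i]) v, i) ∈ E) : PathComplete E := by
  intro w _
  refine ⟨fun j => node (w.take j) (w.drop j), fun j => ?_⟩
  have := h (w.take j) (w.get j) (w.drop (j + 1))
  rwa [List.get_eq_getElem, List.take_concat_get', ← List.drop_eq_getElem_cons] at this

theorem StronglyConnectedEdges.of_hub (c : S) (hin : ∀ x, x ≠ c → ∃ i, (x, c, i) ∈ E)
    (hout : ∀ x, x ≠ c → ∃ i, (c, x, i) ∈ E) : StronglyConnectedEdges E := by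
  intro x y
  have to_hub : Relation.ReflTransGen (fun u v => ∃ i, (u, v, i) ∈ E) x c := by
    by_cases hx : x = c
    · rw [hx]
    · exact .single (hin x hx)
  have from_hub : Relation.ReflTransGen (fun u v => ∃ i, (u, v, i) ∈ E) c y := by
    by_cases hy : y = c
    · rw [hy]
    · exact .single (hout y hy)
  exact to_hub.trans from_hub

end LabeledDigraph

section ForwardLift

variable {S A : Type*} {E : Set (S × S × A)} {u v : S × List A} {i : A}

theorem getLast?_of_mem_fwdLiftEdges (h : (u, v, i) ∈ ⋃ T, fwdLiftEdges E T) (hu : u.2 ≠ []) :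
    u.2.getLast? = some i := by
  obtain ⟨T, hT⟩ := Set.mem_iUnion.mp h
  cases T with
  | zero =>
    obtain ⟨a, b, j, -, he⟩ := hT
    simp_all
  | succ T =>
    obtain ⟨a, b, j, l, jT, -, -, he⟩ := hT
    simp only [Prod.mk.injEq] at he
    obtain ⟨rfl, -, rfl⟩ := he
    exact List.getLast?_concat

theorem word_eq_nil_of_mem_fwdLiftEdges {v' : S × List A} {j : A}
    (hi : (u, v, i) ∈ ⋃ T, fwdLiftEdges E T) (hj : (u, v', j) ∈ ⋃ T, fwdLiftEdges E T)
    (hij : i ≠ j) : u.2 = [] := by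
  by_contra hu
  exact hij (Option.some_injective _ <|
    (getLast?_of_mem_fwdLiftEdges hi hu).symm.trans (getLast?_of_mem_fwdLiftEdges hj hu))

theorem mem_of_mem_fwdLiftEdges_of_word_eq_nil (h : (u, v, i) ∈ ⋃ T, fwdLiftEdges E T)
    (hu : u.2 = []) : v.2 = [] ∧ (u.1, v.1, i) ∈ E := by
  obtain ⟨T, hT⟩ := Set.mem_iUnion.mp h
  cases T with
  | zero =>
    obtain ⟨a, b, j, hab, he⟩ := hT
    simp only [Prod.mk.injEq] at he
    obtain ⟨rfl, rfl, rfl⟩ := he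
    exact ⟨rfl, hab⟩
  | succ T =>
    obtain ⟨a, b, j, l, jT, -, -, he⟩ := hT
    simp_all

end ForwardLift

section Lyapunov

theorem IsKInfty.comp_const_mul {α : ℝ → ℝ} (hα : IsKInfty α) {c : ℝ} (hc : 0 < c) :
    IsKInfty (fun r => α (c * r)) := by
  obtain ⟨hcont, hmono, h0, htop⟩ := hα
  exact ⟨hcont.comp (continuous_const_mul c), hmono.comp (strictMono_mul_left_of_pos hc),
    by simpa using h0, htop.comp (tendsto_id.const_mul_atTop hc)⟩

theorem IsLyap.comp_equiv {n : ℕ} {V : EuclideanSpace ℝ (Fin n) → ℝ} (hV : IsLyap V)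
    (B : EuclideanSpace ℝ (Fin n) ≃L[ℝ] EuclideanSpace ℝ (Fin n)) :
    IsLyap (fun x => V (B x)) := by
  obtain ⟨hcont, h0, hpos, α₁, α₂, hα₁, hα₂, hbound⟩ := hV
  obtain ⟨K, hK, hBsymm⟩ := B.symm.toContinuousLinearMap.bound
  obtain ⟨C, hC, hB⟩ := B.toContinuousLinearMap.bound
  have lower : ∀ x, K⁻¹ * ‖x‖ ≤ ‖B x‖ := fun x => by
    rw [inv_mul_le_iff₀ hK]
    simpa using hBsymm (B x)
  refine ⟨hcont.comp B.continuous, by simpa using h0, fun x hx => hpos _ (by simpa using hx),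
    fun r => α₁ (K⁻¹ * r), fun r => α₂ (C * r), hα₁.comp_const_mul (inv_pos.mpr hK),
    hα₂.comp_const_mul hC, fun x => ⟨?_, ?_⟩⟩
  · exact (hα₁.2.1.monotone (lower x)).trans (hbound (B x)).1
  · exact (hbound (B x)).2.trans (hα₂.2.1.monotone (hB x))

end Lyapunov

instance : DecidablePred (· ∈ GphiEdges) := fun _ => by unfold GphiEdges; infer_instance

instance : DecidablePred (· ∈ GpsiEdges) := fun _ => by unfold GpsiEdges; infer_instance

-- `1 : Fin 2` is the letter `2` of `Σ`.
def oddLeadingOnes : List (Fin 2) → Bool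
  | 1 :: w => !oddLeadingOnes w
  | _ => false

theorem pathComplete_gpsiEdges : PathComplete GpsiEdges := by
  refine pathComplete_of_forall_split (fun _ v => if oddLeadingOnes v then 1 else 0) ?_
  intro _ i v
  fin_cases i <;> cases h : oddLeadingOnes v <;> simp [oddLeadingOnes, h, GpsiEdges]

theorem pathComplete_gphiEdges : PathComplete GphiEdges := by
  refine pathComplete_of_forall_split
    (fun u v => if oddLeadingOnes v then (if u.getLast? = some 0 then 1 else 2) else 0) ?_
  intro _ i v
  fin_cases i <;> cases h : oddLeadingOnes v <;> simp [oddLeadingOnes, h, GphiEdges, em]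

theorem stronglyConnectedEdges_gphiEdges : StronglyConnectedEdges GphiEdges :=
  .of_hub 0 (by decide) (by decide)

theorem stronglyConnectedEdges_gpsiEdges : StronglyConnectedEdges GpsiEdges :=
  .of_hub 0 (by decide) (by decide)

theorem not_pathComplete_gphiEdges_diff : ∀ e ∈ GphiEdges, ¬ PathComplete (GphiEdges \ {e}) := by
  intro e he h
  simp only [GphiEdges, Set.mem_insert_iff, Set.mem_singleton_iff] at he
  rcases he with rfl | rfl | rfl | rfl | rfl
  · exact absurd (h [0, 0] (by simp)) (by decide)
  · exact absurd (h [0, 1, 0] (by simp)) (by decide)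
  · exact absurd (h [0, 1, 0] (by simp)) (by decide)
  · exact absurd (h [1, 1] (by simp)) (by decide)
  · exact absurd (h [1, 1, 0] (by simp)) (by decide)

theorem not_pathComplete_gpsiEdges_diff : ∀ e ∈ GpsiEdges, ¬ PathComplete (GpsiEdges \ {e}) := by
  intro e he h
  simp only [GpsiEdges, Set.mem_insert_iff, Set.mem_singleton_iff] at he
  rcases he with rfl | rfl | rfl | rfl
  · exact absurd (h [0, 0] (by simp)) (by decide)
  · exact absurd (h [0, 1, 0] (by simp)) (by decide)
  · exact absurd (h [1, 1] (by simp)) (by decide)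
  · exact absurd (h [1, 0] (by simp)) (by decide)

theorem not_simulates_gphiEdges_gpsiEdges : ¬ Simulates GphiEdges GpsiEdges := by
  unfold Simulates
  decide

theorem admissible_gpsiEdges_of_gphiEdges {n : ℕ}
    {f : Fin 2 → EuclideanSpace ℝ (Fin n) → EuclideanSpace ℝ (Fin n)}
    {V : Fin 3 → EuclideanSpace ℝ (Fin n) → ℝ} (h : Admissible GphiEdges f V 1) :
    Admissible GpsiEdges f ![V 0, fun x => V 0 (f 1 x)] 1 := by
  have edge : ∀ a b i, (a, b, i) ∈ GphiEdges → ∀ x, V b (f i x) ≤ V a x := fun a b i hab x => by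
    simpa using h a b i hab x
  intro a b i hab x
  simp only [GpsiEdges, Set.mem_insert_iff, Set.mem_singleton_iff, Prod.mk.injEq] at hab
  rcases hab with ⟨rfl, rfl, rfl⟩ | ⟨rfl, rfl, rfl⟩ | ⟨rfl, rfl, rfl⟩ | ⟨rfl, rfl, rfl⟩ <;>
    simp only [Matrix.cons_val_zero, Matrix.cons_val_one, one_mul, ge_iff_le, le_refl]
  · exact edge 0 0 0 (by simp [GphiEdges]) x
  · exact (edge 1 0 1 (by simp [GphiEdges]) _).trans (edge 0 1 0 (by simp [GphiEdges]) x)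
  · exact (edge 2 0 1 (by simp [GphiEdges]) _).trans (edge 0 2 1 (by simp [GphiEdges]) x)

theorem not_simulatesOn_fwdLiftEdges_gphiEdges :
    ¬ SimulatesOn (Set.univ : Set (Fin 3 × List (Fin 2)))
      (⋃ T : ℕ, fwdLiftEdges GphiEdges T) GpsiEdges := by
  rintro ⟨R, -, hR⟩
  have word₀ : (R 0).2 = [] :=
    word_eq_nil_of_mem_fwdLiftEdges (hR 0 0 0 (by simp [GpsiEdges]))
      (hR 0 1 1 (by simp [GpsiEdges])) (by decide)
  have word₁ : (R 1).2 = [] :=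
    (mem_of_mem_fwdLiftEdges_of_word_eq_nil (hR 0 1 1 (by simp [GpsiEdges])) word₀).1
  refine not_simulates_gphiEdges_gpsiEdges ⟨fun s => (R s).1, fun a b i hab => ?_⟩
  have word : (R a).2 = [] := by fin_cases a <;> assumption
  exact (mem_of_mem_fwdLiftEdges_of_word_eq_nil (hR a b i hab) word).2

/-- Conjecture 8.20 is false, witnessed by `G_φ` and `G_ψ`.
Both graphs are path-complete, strongly connected and minimally path-complete; part
(ii) of the conjecture holds: for every dimension, every pair of invertible linear maps
and every template closed under forward composition with invertible linear maps,
admissibility (with `γ = 1`) for `G_φ` implies admissibility for `G_ψ`; yet part (i)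
fails: the forward composition lift `G_φ^∘` does not simulate `G_ψ`. -/
theorem composition_lift_conjecture_false :
    PathComplete GphiEdges ∧ PathComplete GpsiEdges ∧
    StronglyConnectedEdges GphiEdges ∧ StronglyConnectedEdges GpsiEdges ∧
    (∀ e ∈ GphiEdges, ¬ PathComplete (GphiEdges \ {e})) ∧
    (∀ e ∈ GpsiEdges, ¬ PathComplete (GpsiEdges \ {e})) ∧
    (∀ n : ℕ, 1 ≤ n →
      ∀ A₁ A₂ : EuclideanSpace ℝ (Fin n) ≃L[ℝ] EuclideanSpace ℝ (Fin n),
      ∀ 𝒱 : (m : ℕ) → Set (EuclideanSpace ℝ (Fin m) → ℝ),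
        (∀ m, ∀ W ∈ 𝒱 m, Continuous W) →
        (∀ m, ∀ W ∈ 𝒱 m,
          ∀ B : EuclideanSpace ℝ (Fin m) ≃L[ℝ] EuclideanSpace ℝ (Fin m),
            (fun x => W (B x)) ∈ 𝒱 m) →
      (∃ V : Fin 3 → EuclideanSpace ℝ (Fin n) → ℝ,
          (∀ s, V s ∈ 𝒱 n ∧ IsLyap (V s)) ∧
          Admissible GphiEdges (fun i x => if i = 0 then A₁ x else A₂ x) V 1) →
      (∃ V' : Fin 2 → EuclideanSpace ℝ (Fin n) → ℝ,
          (∀ s, V' s ∈ 𝒱 n ∧ IsLyap (V' s)) ∧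
          Admissible GpsiEdges (fun i x => if i = 0 then A₁ x else A₂ x) V' 1)) ∧
    ¬ SimulatesOn (Set.univ : Set (Fin 3 × List (Fin 2)))
        (⋃ T : ℕ, fwdLiftEdges GphiEdges T) GpsiEdges := by
  refine ⟨pathComplete_gphiEdges, pathComplete_gpsiEdges, stronglyConnectedEdges_gphiEdges,
    stronglyConnectedEdges_gpsiEdges, not_pathComplete_gphiEdges_diff,
    not_pathComplete_gpsiEdges_diff, ?_, not_simulatesOn_fwdLiftEdges_gphiEdges⟩
  rintro n - A₁ A₂ 𝒱 - h𝒱 ⟨V, hV, hadm⟩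
  refine ⟨_, fun s => ?_, admissible_gpsiEdges_of_gphiEdges hadm⟩
  fin_cases s
  · exact hV 0
  · exact ⟨h𝒱 n _ (hV 0).1 A₂, (hV 0).2.comp_equiv A₂⟩
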